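/- Let f(u) = u³, g(u) = 2u³, α = 1, β = 2 on an open interval J with 0 ∉ J, giving a first-type surface S₁ (ε = −1; indeed f² − 4g² = −15u⁶ < 0 and f'² + g'² = 45u⁴ > 0 on J). Then K_φ(u) = −2δ = −2(λ₁ + λ₂ + λ₃ − λ₄) for every u ∈ J; in particular, the surface is weighted flat whenever λ₁ + λ₂ + λ₃ = λ₄. -/

import Mathlib

open Real Set

/-- Weighted Gaussian curvature of the timelike general rotational surface `S_i`
(`ε = -1` for the first type, `ε = 1` for the second type) in `E₁⁴` with
density `e^{λ₁x²+λ₂y²+λ₃z²+λ₄t²}`, where `δ = λ₁+λ₂+λ₃−λ₄`. -/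
noncomputable def Kphi (α β δ ε : ℝ) (f g : ℝ → ℝ) (u : ℝ) : ℝ :=
  (-2 * δ * (α ^ 2 * (f u) ^ 2 + ε * β ^ 2 * (g u) ^ 2) ^ 2
      * (-ε * (deriv f u) ^ 2 + (deriv g u) ^ 2) ^ 2
    + α ^ 2 * β ^ 2 * (g u * deriv f u - f u * deriv g u) ^ 2
      * (-ε * (deriv f u) ^ 2 + (deriv g u) ^ 2)
    + (ε * α ^ 2 * (f u) ^ 2 + β ^ 2 * (g u) ^ 2)
      * (β ^ 2 * g u * deriv f u + α ^ 2 * f u * deriv g u)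
      * (deriv (deriv f) u * deriv g u - deriv f u * deriv (deriv g) u))
  / ((α ^ 2 * (f u) ^ 2 + ε * β ^ 2 * (g u) ^ 2) ^ 2
      * (-ε * (deriv f u) ^ 2 + (deriv g u) ^ 2) ^ 2)

lemma deriv_cube : deriv (fun u : ℝ => u ^ 3) = fun u => 3 * u ^ 2 := by
  ext u
  simp [deriv_pow]

lemma deriv_two_cube : deriv (fun u : ℝ => 2 * u ^ 3) = fun u => 6 * u ^ 2 := by
  ext u
  rw [deriv_const_mul _ (by fun_prop)]
  simp [deriv_pow]
  ring

lemma deriv_sq (c : ℝ) : deriv (fun u : ℝ => c * u ^ 2) = fun u => 2 * c * u := by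
  ext u
  rw [deriv_const_mul _ (by fun_prop)]
  simp [deriv_pow]
  ring

theorem example_first_type_cubic_weighted_flat
    (J : Set ℝ) (hJo : IsOpen J) (hJc : J.OrdConnected) (h0 : (0 : ℝ) ∉ J)
    (l1 l2 l3 l4 : ℝ) (hl : ¬(l1 = 0 ∧ l2 = 0 ∧ l3 = 0 ∧ l4 = 0)) :
    (∀ u ∈ J, Kphi 1 2 (l1 + l2 + l3 - l4) (-1)
        (fun u => u ^ 3) (fun u => 2 * u ^ 3) u = -2 * (l1 + l2 + l3 - l4))
    ∧ (l1 + l2 + l3 = l4 → ∀ u ∈ J, Kphi 1 2 (l1 + l2 + l3 - l4) (-1)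
        (fun u => u ^ 3) (fun u => 2 * u ^ 3) u = 0) := by
  have key : ∀ u ∈ J, Kphi 1 2 (l1 + l2 + l3 - l4) (-1)
      (fun u => u ^ 3) (fun u => 2 * u ^ 3) u = -2 * (l1 + l2 + l3 - l4) := by
    intro u hu
    have hu0 : u ≠ 0 := fun h => h0 (h ▸ hu)
    unfold Kphi
    rw [deriv_cube, deriv_two_cube, deriv_sq, deriv_sq]
    field_simp
    ring_nf
  refine ⟨key, fun h u hu => ?_⟩
  rw [key u hu]
  rw [show l1 + l2 + l3 - l4 = 0 by linarith]
  ring
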